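/- arXiv:2501.06181 — 3 statements merged into one kernel-verified Lean document; each statement's English description precedes it below -/
import Mathlib

section
/- Let n, m, l, N be positive integers with l ≤ N = n. Let X ∈ ℂ^{n×n} be invertible, let B̃ ∈ ℂ^{n×m} with columns b̃_1,…,b̃_m, let L ∈ ℂ^{n×n} satisfy ‖L e_j‖_∞ ≤ 1 for every standard basis vector e_j, and let δ_1 ≥ δ_2 ≥ … ≥ δ_n ≥ 0 with δ_1 > 0. For j = 1,…,n define Z_j ∈ ℂ^{n×m} as the matrix whose p-th column is X · diag(X^{-1} b̃_p) · (L e_j), and set W := Σ_{j=1}^{n} δ_j Z_j Z_j^* and Ŵ_l := Σ_{j=1}^{l} δ_j Z_j Z_j^*. If ε > 0 and δ_l / δ_1 < ε, then Ŵ_l has rank at most l·m and ‖W − Ŵ_l‖_∞ ≤ ε · δ_1 · (m n) · (n − l) · (κ_∞(X) · ‖B̃‖_1)^2. -/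
open Matrix

/-- The induced `∞`-norm (maximum absolute row sum) of a complex matrix. -/
noncomputable def matInfNorm {n m : ℕ} (M : Matrix (Fin n) (Fin m) ℂ) : ℝ :=
  ⨆ i, ∑ j, ‖M i j‖

/-- The induced `1`-norm (maximum absolute column sum) of a complex matrix. -/
noncomputable def matOneNorm {n m : ℕ} (M : Matrix (Fin n) (Fin m) ℂ) : ℝ :=
  ⨆ j, ∑ i, ‖M i j‖

/-- The `∞`-norm (maximum absolute entry) of a complex vector. -/
noncomputable def vecInfNorm {n : ℕ} (v : Fin n → ℂ) : ℝ :=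
  ⨆ i, ‖v i‖

/-- The `∞`-norm condition number `κ_∞(X) = ‖X‖_∞ ‖X⁻¹‖_∞`. -/
noncomputable def condInf {n : ℕ} (X : Matrix (Fin n) (Fin n) ℂ) : ℝ :=
  matInfNorm X * matInfNorm X⁻¹

/-- `Z_j ∈ ℂ^{n×m}`: the matrix whose `p`-th column is `X · diag(X⁻¹ b̃_p) · (L e_j)`,
where `b̃_p` is the `p`-th column of `B̃` and `e_j` is the `j`-th standard basis vector. -/
noncomputable def Zmat {n m : ℕ} (X : Matrix (Fin n) (Fin n) ℂ)
    (Btil : Matrix (Fin n) (Fin m) ℂ) (L : Matrix (Fin n) (Fin n) ℂ) (j : Fin n) :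
    Matrix (Fin n) (Fin m) ℂ :=
  Matrix.of fun i p =>
    (X *ᵥ (Matrix.diagonal (X⁻¹ *ᵥ fun q => Btil q p) *ᵥ (L *ᵥ Pi.single j 1))) i

/-! The tail `W - Ŵ_l = Σ_{j > l} δ_j Z_j Z_jᴴ` has at most `n - l` terms, each weight at most
`δ_l < ε δ_1`. Every entry of `Z_j` is bounded by `κ_∞(X) ‖B̃‖_1`, since
`‖X⁻¹ b̃_p‖_∞ ≤ ‖X⁻¹‖_∞ ‖B̃‖_1` and `‖L e_j‖_∞ ≤ 1`; so every entry of `Z_j Z_jᴴ` is bounded by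
`m (κ_∞(X) ‖B̃‖_1)²`, and a row sum of the tail by `n (n - l) ε δ_1 m (κ_∞(X) ‖B̃‖_1)²`.
The rank bound is subadditivity of the rank, each `Z_j Z_jᴴ` having rank at most `m`. -/

namespace Matrix

variable {m n K : Type*} [Fintype n] [Field K]

theorem rank_add_le (A B : Matrix m n K) : (A + B).rank ≤ A.rank + B.rank := by
  rw [rank, rank, rank, mulVecLin_add]
  refine (Submodule.finrank_mono (LinearMap.range_add_le _ _)).trans ?_
  exact Submodule.finrank_add_le_finrank_add_finrank _ _

theorem rank_sum_le {ι : Type*} (s : Finset ι) (A : ι → Matrix m n K) :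
    (∑ j ∈ s, A j).rank ≤ ∑ j ∈ s, (A j).rank :=
  Finset.le_sum_of_subadditive (rank : Matrix m n K → ℕ) rank_zero.le rank_add_le s A

end Matrix

section Norms

variable {n k : ℕ}

theorem norm_apply_le_vecInfNorm (v : Fin n → ℂ) (i : Fin n) : ‖v i‖ ≤ vecInfNorm v :=
  le_ciSup (f := fun i => ‖v i‖) (Set.finite_range _).bddAbove i

theorem rowSum_le_matInfNorm (M : Matrix (Fin n) (Fin k) ℂ) (i : Fin n) :
    ∑ j, ‖M i j‖ ≤ matInfNorm M :=
  le_ciSup (f := fun i => ∑ j, ‖M i j‖) (Set.finite_range _).bddAbove i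

theorem matInfNorm_nonneg (M : Matrix (Fin n) (Fin k) ℂ) : 0 ≤ matInfNorm M :=
  Real.iSup_nonneg fun _ => Finset.sum_nonneg fun _ _ => norm_nonneg _

theorem matInfNorm_le_of_norm_apply_le (M : Matrix (Fin n) (Fin k) ℂ) {c : ℝ} (hc : 0 ≤ c)
    (hM : ∀ i j, ‖M i j‖ ≤ c) : matInfNorm M ≤ k * c := by
  refine Real.iSup_le (fun i => ?_) (by positivity)
  simpa using Finset.sum_le_sum fun j (_ : j ∈ Finset.univ) => hM i j

theorem norm_apply_le_matOneNorm (M : Matrix (Fin n) (Fin k) ℂ) (i : Fin n) (j : Fin k) :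
    ‖M i j‖ ≤ matOneNorm M :=
  (Finset.single_le_sum (fun i _ => norm_nonneg (M i j)) (Finset.mem_univ i)).trans
    (le_ciSup (f := fun j => ∑ i, ‖M i j‖) (Set.finite_range _).bddAbove j)

theorem matOneNorm_nonneg (M : Matrix (Fin n) (Fin k) ℂ) : 0 ≤ matOneNorm M :=
  Real.iSup_nonneg fun _ => Finset.sum_nonneg fun _ _ => norm_nonneg _

theorem norm_mulVec_apply_le (A : Matrix (Fin n) (Fin k) ℂ) (v : Fin k → ℂ) {c : ℝ}
    (hc : 0 ≤ c) (hv : ∀ j, ‖v j‖ ≤ c) (i : Fin n) : ‖(A *ᵥ v) i‖ ≤ matInfNorm A * c :=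
  calc ‖∑ j, A i j * v j‖
      ≤ ∑ j, ‖A i j‖ * c := (norm_sum_le _ _).trans <| Finset.sum_le_sum fun j _ => by
        rw [norm_mul]; exact mul_le_mul_of_nonneg_left (hv j) (norm_nonneg _)
    _ = (∑ j, ‖A i j‖) * c := (Finset.sum_mul ..).symm
    _ ≤ matInfNorm A * c := mul_le_mul_of_nonneg_right (rowSum_le_matInfNorm A i) hc

theorem norm_mul_apply_le {p : ℕ} (A : Matrix (Fin n) (Fin k) ℂ) (B : Matrix (Fin k) (Fin p) ℂ)
    {a b : ℝ} (hA : ∀ i j, ‖A i j‖ ≤ a) (hB : ∀ i j, ‖B i j‖ ≤ b) (i : Fin n) (j : Fin p) :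
    ‖(A * B) i j‖ ≤ k * (a * b) := by
  rw [mul_apply]
  refine (norm_sum_le _ _).trans ?_
  simpa [norm_mul] using Finset.sum_le_sum fun q (_ : q ∈ Finset.univ) =>
    mul_le_mul (hA i q) (hB q j) (norm_nonneg _) ((norm_nonneg _).trans (hA i q))

end Norms

theorem norm_sum_smul_apply_le {ι α β E : Type*} [NormedAddCommGroup E] [NormedSpace ℝ E]
    (s : Finset ι) (δ : ι → ℝ) (hδ : ∀ j ∈ s, 0 ≤ δ j) (M : ι → Matrix α β E) {c : ℝ}
    (hM : ∀ j ∈ s, ∀ a b, ‖M j a b‖ ≤ c) (a : α) (b : β) :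
    ‖(∑ j ∈ s, δ j • M j) a b‖ ≤ (∑ j ∈ s, δ j) * c := by
  rw [Matrix.sum_apply, Finset.sum_mul]
  refine (norm_sum_le _ _).trans (Finset.sum_le_sum fun j hj => ?_)
  rw [Matrix.smul_apply, norm_smul, Real.norm_of_nonneg (hδ j hj)]
  exact mul_le_mul_of_nonneg_left (hM j hj a b) (hδ j hj)

theorem Fin.sum_filter_not_val_lt_le {n l : ℕ} (hln : l ≤ n) (δ : Fin n → ℝ) {c : ℝ}
    (hδ : ∀ j : Fin n, l ≤ j → δ j ≤ c) :
    ∑ j ∈ Finset.univ.filter (fun j : Fin n => ¬ (j : ℕ) < l), δ j ≤ (n - l) * c := by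
  have hcard : (Finset.univ.filter (fun j : Fin n => ¬ (j : ℕ) < l)).card = n - l := by
    have := Finset.card_filter_add_card_filter_not (s := Finset.univ)
      (fun j : Fin n => (j : ℕ) < l)
    rw [Fin.card_filter_val_lt, Finset.card_univ, Fintype.card_fin, min_eq_right hln] at this
    omega
  refine (Finset.sum_le_card_nsmul _ _ c fun j hj => hδ j ?_).trans_eq ?_
  · simpa using hj
  · rw [hcard, nsmul_eq_mul, Nat.cast_sub hln]

theorem norm_Zmat_apply_le {n m : ℕ} (X : Matrix (Fin n) (Fin n) ℂ)
    (Btil : Matrix (Fin n) (Fin m) ℂ) (L : Matrix (Fin n) (Fin n) ℂ)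
    (hL : ∀ j : Fin n, vecInfNorm (L *ᵥ Pi.single j 1) ≤ 1) (j i : Fin n) (p : Fin m) :
    ‖Zmat X Btil L j i p‖ ≤ condInf X * matOneNorm Btil := by
  set v := X⁻¹ *ᵥ fun q => Btil q p
  set w := L *ᵥ Pi.single j 1
  have hv : ∀ k, ‖v k‖ ≤ matInfNorm X⁻¹ * matOneNorm Btil :=
    norm_mulVec_apply_le _ _ (matOneNorm_nonneg _) fun q => norm_apply_le_matOneNorm Btil q p
  have hvw : ∀ k, ‖(diagonal v *ᵥ w) k‖ ≤ matInfNorm X⁻¹ * matOneNorm Btil := fun k => by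
    rw [mulVec_diagonal, norm_mul]
    exact (mul_le_of_le_one_right (norm_nonneg _)
      ((norm_apply_le_vecInfNorm w k).trans (hL j))).trans (hv k)
  rw [condInf, mul_assoc]
  exact norm_mulVec_apply_le X _ (mul_nonneg (matInfNorm_nonneg _) (matOneNorm_nonneg _)) hvw i

theorem norm_Zmat_mul_conjTranspose_apply_le {n m : ℕ} (X : Matrix (Fin n) (Fin n) ℂ)
    (Btil : Matrix (Fin n) (Fin m) ℂ) (L : Matrix (Fin n) (Fin n) ℂ)
    (hL : ∀ j : Fin n, vecInfNorm (L *ᵥ Pi.single j 1) ≤ 1) (j a b : Fin n) :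
    ‖(Zmat X Btil L j * (Zmat X Btil L j)ᴴ) a b‖ ≤ m * (condInf X * matOneNorm Btil) ^ 2 := by
  rw [sq]
  refine norm_mul_apply_le _ _ (norm_Zmat_apply_le X Btil L hL j) (fun p i => ?_) a b
  rw [conjTranspose_apply, norm_star]
  exact norm_Zmat_apply_le X Btil L hL j i p

/-- paper's Theorem 1: with `W = Σ_{j=1}^{n} δ_j Z_j Z_j^*` and the truncation
`Ŵ_l = Σ_{j=1}^{l} δ_j Z_j Z_j^*`, if `δ_l / δ_1 < ε` then `Ŵ_l` has rank at most `l·m` and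
`‖W − Ŵ_l‖_∞ ≤ ε δ_1 (m n)(n − l)(κ_∞(X) ‖B̃‖_1)²`. -/
theorem lowRank_gramian_approximation {n m l N : ℕ}
    (hn : 0 < n) (hNn : N = n) (hlN : l ≤ N)
    (X : Matrix (Fin n) (Fin n) ℂ)
    (Btil : Matrix (Fin n) (Fin m) ℂ)
    (L : Matrix (Fin n) (Fin n) ℂ)
    (hL : ∀ j : Fin n, vecInfNorm (L *ᵥ Pi.single j 1) ≤ 1)
    (δ : Fin n → ℝ)
    (hδmono : ∀ i j : Fin n, i ≤ j → δ j ≤ δ i)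
    (hδnonneg : ∀ j, 0 ≤ δ j)
    (hδ1 : 0 < δ ⟨0, hn⟩)
    (ε : ℝ)
    (hratio : δ ⟨l - 1, by omega⟩ / δ ⟨0, hn⟩ < ε) :
    (∑ j ∈ Finset.univ.filter (fun j : Fin n => (j : ℕ) < l),
        δ j • (Zmat X Btil L j * (Zmat X Btil L j)ᴴ)).rank ≤ l * m ∧
      matInfNorm
          ((∑ j : Fin n, δ j • (Zmat X Btil L j * (Zmat X Btil L j)ᴴ)) -
            ∑ j ∈ Finset.univ.filter (fun j : Fin n => (j : ℕ) < l),
              δ j • (Zmat X Btil L j * (Zmat X Btil L j)ᴴ)) ≤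
        ε * δ ⟨0, hn⟩ * (m * n) * (n - l) * (condInf X * matOneNorm Btil) ^ 2 := by
  have hln : l ≤ n := hNn ▸ hlN
  constructor
  · have hterm (j : Fin n) : (δ j • (Zmat X Btil L j * (Zmat X Btil L j)ᴴ)).rank ≤ m := by
      rw [← Matrix.mul_smul]
      exact (rank_mul_le_left _ _).trans (rank_le_width _)
    refine (rank_sum_le _ _).trans ((Finset.sum_le_card_nsmul _ _ m fun j _ => hterm j).trans ?_)
    rw [smul_eq_mul, Fin.card_filter_val_lt]
    exact Nat.mul_le_mul_right m (min_le_right _ _)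
  · set s := Finset.univ.filter (fun j : Fin n => ¬ (j : ℕ) < l)
    have htail : ∑ j ∈ s, δ j ≤ (n - l) * (ε * δ ⟨0, hn⟩) := by
      have hδl : δ ⟨l - 1, by omega⟩ < ε * δ ⟨0, hn⟩ := (div_lt_iff₀ hδ1).mp hratio
      refine Fin.sum_filter_not_val_lt_le hln δ fun j hj => ?_
      exact (hδmono _ j (Fin.mk_le_of_le_val (by omega))).trans hδl.le
    have hs : 0 ≤ ∑ j ∈ s, δ j := Finset.sum_nonneg fun j _ => hδnonneg j
    rw [← Finset.sum_filter_add_sum_filter_not Finset.univ (fun j : Fin n => (j : ℕ) < l),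
      add_sub_cancel_left]
    refine (matInfNorm_le_of_norm_apply_le _ (by positivity)
      (norm_sum_smul_apply_le s δ (fun j _ => hδnonneg j) _
        fun j _ => norm_Zmat_mul_conjTranspose_apply_le X Btil L hL j)).trans ?_
    calc (n : ℝ) * ((∑ j ∈ s, δ j) * (m * (condInf X * matOneNorm Btil) ^ 2))
        ≤ n * ((n - l) * (ε * δ ⟨0, hn⟩) * (m * (condInf X * matOneNorm Btil) ^ 2)) := by
          gcongr
      _ = _ := by ring
end

section
/- Let λ_1, …, λ_N ∈ ℂ satisfy |λ_j| < 1 for all j, and define the matrix C ∈ ℂ^{N×N} by C_{hj} = −(λ_h + 1)(conj(λ_j) + 1) / (2(λ_h · conj(λ_j) − 1)) (equivalently, C_{hj} = (1 + λ_h)(1 + conj(λ_j)) / (2(1 − λ_h · conj(λ_j)))). Then C is Hermitian and positive semidefinite; moreover, if the λ_j are pairwise distinct and λ_j ≠ −1 for all j, then C is positive definite. -/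
open Matrix ComplexOrder

/-!
Expanding `1 / (1 - λ_h conj λ_j)` as a geometric series writes the quadratic form of
`C_{hj} = w_h conj w_j / (1 - λ_h conj λ_j)` as `∑_k |∑_h conj x_h w_h λ_h ^ k|²`, which is
nonnegative. If it vanishes, every moment `∑_h conj x_h w_h λ_h ^ k` vanishes; for distinct `λ_h`
the Vandermonde matrix is invertible, so `conj x_h w_h = 0` for all `h`. The matrix of the theorem is
half of this one with `w_h = λ_h + 1`.
-/

namespace Matrix

variable {ι : Type*}

noncomputable def discreteCauchyMatrix (w lam : ι → ℂ) : Matrix ι ι ℂ :=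
  of fun h j => w h * starRingEnd ℂ (w j) / (1 - lam h * starRingEnd ℂ (lam j))

theorem discreteCauchyMatrix_isHermitian (w lam : ι → ℂ) :
    (discreteCauchyMatrix w lam).IsHermitian := by
  ext h j
  simp only [conjTranspose_apply, discreteCauchyMatrix, of_apply, star_div₀, star_mul',
    star_sub, star_one, Complex.star_def, Complex.conj_conj]
  ring

theorem hasSum_dotProduct_discreteCauchyMatrix_mulVec [Fintype ι] {w lam : ι → ℂ}
    (hlam : ∀ j, ‖lam j‖ < 1) (x : ι → ℂ) :
    HasSum (fun k : ℕ => (Complex.normSq (∑ h, star (x h) * w h * lam h ^ k) : ℂ))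
      (star x ⬝ᵥ discreteCauchyMatrix w lam *ᵥ x) := by
  set a : ℕ → ι → ℂ := fun k h => star (x h) * w h * lam h ^ k
  have hentry : ∀ h j, HasSum (fun k => a k h * starRingEnd ℂ (a k j))
      (star (x h) * (discreteCauchyMatrix w lam h j * x j)) := by
    intro h j
    have hratio : ‖lam h * starRingEnd ℂ (lam j)‖ < 1 := by
      rw [norm_mul, Complex.norm_conj]
      exact mul_lt_one_of_nonneg_of_lt_one_left (norm_nonneg _) (hlam h) (hlam j).le
    set c := star (x h) * w h * starRingEnd ℂ (star (x j) * w j)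
    have hterms : (fun k => a k h * starRingEnd ℂ (a k j)) =
        fun k => c * (lam h * starRingEnd ℂ (lam j)) ^ k := by
      ext k
      simp only [a, c, map_mul, map_pow, mul_pow]
      ring
    have hvalue : star (x h) * (discreteCauchyMatrix w lam h j * x j) =
        c * (1 - lam h * starRingEnd ℂ (lam j))⁻¹ := by
      simp only [c, discreteCauchyMatrix, of_apply, map_mul, Complex.star_def, Complex.conj_conj]
      ring
    rw [hterms, hvalue]
    exact (hasSum_geometric_of_norm_lt_one hratio).mul_left c
  convert hasSum_sum fun h _ => hasSum_sum fun j _ => hentry h j using 1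
  · ext k
    rw [← Complex.mul_conj, map_sum, Finset.sum_mul_sum]
  · simp only [dotProduct, mulVec, Pi.star_apply, Finset.mul_sum]

theorem posSemidef_discreteCauchyMatrix [Fintype ι] (w : ι → ℂ) {lam : ι → ℂ}
    (hlam : ∀ j, ‖lam j‖ < 1) : (discreteCauchyMatrix w lam).PosSemidef :=
  posSemidef_iff_dotProduct_mulVec.mpr ⟨discreteCauchyMatrix_isHermitian w lam, fun x =>
    (hasSum_dotProduct_discreteCauchyMatrix_mulVec hlam x).nonneg fun _ =>
      Complex.zero_le_real.mpr (Complex.normSq_nonneg _)⟩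

theorem posDef_discreteCauchyMatrix {n : ℕ} {w lam : Fin n → ℂ} (hlam : ∀ j, ‖lam j‖ < 1)
    (hinj : Function.Injective lam) (hw : ∀ j, w j ≠ 0) :
    (discreteCauchyMatrix w lam).PosDef := by
  refine posDef_iff_dotProduct_mulVec.mpr ⟨discreteCauchyMatrix_isHermitian w lam, fun x hx => ?_⟩
  have hsum := hasSum_dotProduct_discreteCauchyMatrix_mulVec (w := w) hlam x
  have hterm_nonneg : ∀ k : ℕ,
      0 ≤ (Complex.normSq (∑ h, star (x h) * w h * lam h ^ k) : ℂ) := fun _ =>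
    Complex.zero_le_real.mpr (Complex.normSq_nonneg _)
  refine (hsum.nonneg hterm_nonneg).lt_of_ne fun hzero => hx ?_
  rw [← hzero, hasSum_zero_iff_of_nonneg hterm_nonneg] at hsum
  have hmoments : ∀ k : ℕ, ∑ h, star (x h) * w h * lam h ^ k = 0 := fun k => by
    simpa using congrFun hsum k
  have hcoeff := eq_zero_of_forall_pow_sum_mul_pow_eq_zero hinj fun k => hmoments k
  funext h
  simpa [hw h] using congrFun hcoeff h

end Matrix

/-- the discrete-time Cauchy matrix
`C_{hj} = −(λ_h + 1)(conj λ_j + 1) / (2(λ_h conj λ_j − 1))` built from points in the open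
unit disk is Hermitian positive semidefinite, and positive definite when the `λ_j` are
pairwise distinct and all different from `−1`. -/
theorem cauchy_matrix_posSemidef {N : ℕ} (lam : Fin N → ℂ)
    (hlam : ∀ j, ‖lam j‖ < 1) :
    (Matrix.of fun h j : Fin N =>
        -((lam h + 1) * ((starRingEnd ℂ) (lam j) + 1)) /
          (2 * (lam h * (starRingEnd ℂ) (lam j) - 1))).IsHermitian ∧
    (Matrix.of fun h j : Fin N =>
        -((lam h + 1) * ((starRingEnd ℂ) (lam j) + 1)) /
          (2 * (lam h * (starRingEnd ℂ) (lam j) - 1))).PosSemidef ∧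
    (Function.Injective lam → (∀ j, lam j ≠ -1) →
      (Matrix.of fun h j : Fin N =>
          -((lam h + 1) * ((starRingEnd ℂ) (lam j) + 1)) /
            (2 * (lam h * (starRingEnd ℂ) (lam j) - 1))).PosDef) := by
  have hC : (Matrix.of fun h j : Fin N =>
        -((lam h + 1) * ((starRingEnd ℂ) (lam j) + 1)) /
          (2 * (lam h * (starRingEnd ℂ) (lam j) - 1))) =
      (2⁻¹ : ℂ) • discreteCauchyMatrix (fun j => lam j + 1) lam := by
    ext h j
    simp only [of_apply, Matrix.smul_apply, discreteCauchyMatrix, map_add, map_one, smul_eq_mul]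
    rw [← neg_sub 1, mul_neg, div_neg, neg_div, neg_neg, ← div_div]
    ring
  have hpsd := (posSemidef_discreteCauchyMatrix (fun j => lam j + 1) hlam).smul
    (by positivity : (0 : ℂ) ≤ 2⁻¹)
  rw [hC]
  refine ⟨hpsd.isHermitian, hpsd, fun hinj hne => ?_⟩
  refine (posDef_discreteCauchyMatrix hlam hinj fun j => ?_).smul (by positivity)
  exact fun h => hne j (eq_neg_of_add_eq_zero_left h)
end

section
/- Let A ∈ ℝ^{n×n} be Schur stable (every complex eigenvalue of A has absolute value strictly less than 1), let W, Q ∈ ℝ^{n×n}, let Σ_0 ∈ ℝ^{n×n}, and define Σ_{t+1} = A Σ_t Aᵀ + W. Let Σ be the unique solution of Σ = A Σ Aᵀ + W. Then the Cesàro averages converge: lim_{T→∞} (1/T) Σ_{t=0}^{T−1} trace(Σ_t · Q) = trace(Σ · Q). -/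
open Matrix Filter
open scoped Topology ENNReal NNReal

section NormPart

attribute [local instance] Matrix.linftyOpNormedRing Matrix.linftyOpNormedAlgebra

/-- entry bound for the L∞ operator norm -/
private lemma entry_le_norm {n : ℕ} (M : Matrix (Fin n) (Fin n) ℂ) (i j : Fin n) :
    ‖M i j‖₊ ≤ ‖M‖₊ := by
  rw [Matrix.linfty_opNNNorm_def]
  calc ‖M i j‖₊ ≤ ∑ j', ‖M i j'‖₊ :=
        Finset.single_le_sum (f := fun j' => ‖M i j'‖₊) (fun _ _ => by positivity) (Finset.mem_univ j)
    _ ≤ Finset.univ.sup fun i' => ∑ j', ‖M i' j'‖₊ :=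
        Finset.le_sup (f := fun i' => ∑ j', ‖M i' j'‖₊) (Finset.mem_univ i)

private lemma entries_pow_tendsto_zero {n : ℕ}
    (A : Matrix (Fin n) (Fin n) ℝ)
    (hA : ∀ lam : ℂ, ((A.map (Complex.ofReal)) -
        lam • (1 : Matrix (Fin n) (Fin n) ℂ)).det = 0 → ‖lam‖ < 1)
    (i j : Fin n) :
    Tendsto (fun t : ℕ => |(A ^ t) i j|) atTop (𝓝 0) := by
  set M : Matrix (Fin n) (Fin n) ℂ := A.map (Complex.ofReal) with hMdef
  -- spectrum condition
  have hspec : ∀ z ∈ spectrum ℂ M, ‖z‖₊ < 1 := by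
    intro z hz
    rw [spectrum.mem_iff] at hz
    have hdet : (z • (1 : Matrix (Fin n) (Fin n) ℂ) - M).det = 0 := by
      by_contra h
      exact hz (by
        rw [Algebra.algebraMap_eq_smul_one]
        exact (Matrix.isUnit_iff_isUnit_det _).mpr (isUnit_iff_ne_zero.mpr h))
    have hdet2 : (M - z • (1 : Matrix (Fin n) (Fin n) ℂ)).det = 0 := by
      have hneg : M - z • (1 : Matrix (Fin n) (Fin n) ℂ) =
          -(z • (1 : Matrix (Fin n) (Fin n) ℂ) - M) := (neg_sub _ _).symm
      rw [hneg, Matrix.det_neg, hdet, mul_zero]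
    have := hA z hdet2
    rw [← NNReal.coe_lt_coe]
    simpa [Complex.norm_def] using this
  have hρ : spectralRadius ℂ M < 1 := by
    rcases Set.eq_empty_or_nonempty (spectrum ℂ M) with h | h
    · simp only [spectralRadius, h]
      simp
    · exact_mod_cast spectrum.spectralRadius_lt_of_forall_lt_of_nonempty h hspec
  obtain ⟨r, hr1, hr2⟩ := ENNReal.lt_iff_exists_nnreal_btwn.mp hρ
  have hrlt1 : r < 1 := by exact_mod_cast hr2
  have hg := spectrum.pow_nnnorm_pow_one_div_tendsto_nhds_spectralRadius M
  have hev : ∀ᶠ k : ℕ in atTop, (‖M ^ k‖₊ : ℝ≥0∞) ^ (1 / (k : ℝ)) < (r : ℝ≥0∞) :=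
    hg.eventually_lt_const hr1
  have hbound : ∀ᶠ k in atTop, (‖M ^ k‖ : ℝ) ≤ (r : ℝ) ^ k := by
    filter_upwards [hev, eventually_ge_atTop 1] with k hk hk1
    have hkne : (1 / (k : ℝ)) ≠ 0 := by
      positivity
    have h2 : ((‖M ^ k‖₊ : ℝ≥0∞) ^ (1 / (k : ℝ))) ^ (k : ℝ) <
        ((r : ℝ≥0∞)) ^ (k : ℝ) := by
      apply ENNReal.rpow_lt_rpow hk
      positivity
    rw [← ENNReal.rpow_mul] at h2
    have hmul : (1 / (k : ℝ)) * (k : ℝ) = 1 := by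
      field_simp
    rw [hmul, ENNReal.rpow_one, ENNReal.rpow_natCast, ← ENNReal.coe_pow,
      ENNReal.coe_lt_coe] at h2
    have := le_of_lt h2
    rw [← NNReal.coe_le_coe] at this
    simpa using this
  have hr0 : Tendsto (fun k : ℕ => (r : ℝ) ^ k) atTop (𝓝 0) :=
    tendsto_pow_atTop_nhds_zero_of_lt_one r.coe_nonneg (by exact_mod_cast hrlt1)
  have hnorm : Tendsto (fun k : ℕ => ‖M ^ k‖) atTop (𝓝 0) :=
    squeeze_zero' (Eventually.of_forall fun k => norm_nonneg _) hbound hr0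
  -- transfer to entries of A ^ t
  have hmap : ∀ t : ℕ, M ^ t = (A ^ t).map (Complex.ofReal) := by
    intro t
    have := map_pow (Complex.ofRealHom.mapMatrix :
      Matrix (Fin n) (Fin n) ℝ →+* Matrix (Fin n) (Fin n) ℂ) A t
    exact this.symm
  apply squeeze_zero (fun t => abs_nonneg _) _ hnorm
  intro t
  have h1 : |(A ^ t) i j| = ‖(M ^ t) i j‖ := by
    rw [hmap t]
    simp [Matrix.map_apply, Complex.norm_real]
  rw [h1]
  exact_mod_cast entry_le_norm (M ^ t) i j

end NormPart

private lemma pow_tendsto_zero {n : ℕ}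
    (A : Matrix (Fin n) (Fin n) ℝ)
    (hA : ∀ lam : ℂ, ((A.map (Complex.ofReal)) -
        lam • (1 : Matrix (Fin n) (Fin n) ℂ)).det = 0 → ‖lam‖ < 1) :
    Tendsto (fun t : ℕ => A ^ t) atTop (𝓝 (0 : Matrix (Fin n) (Fin n) ℝ)) := by
  refine tendsto_pi_nhds.mpr ?_
  intro i
  rw [tendsto_pi_nhds]
  intro j
  have h := entries_pow_tendsto_zero A hA i j
  have : Tendsto (fun t : ℕ => (A ^ t) i j) atTop (𝓝 0) := by
    apply squeeze_zero_norm _ h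
    intro t
    simp [Real.norm_eq_abs]
  simpa using this

/-- for Schur stable `A`, the Cesàro averages of the stage costs
`trace(Σ_t Q)` along the covariance recursion `Σ_{t+1} = A Σ_t Aᵀ + W` converge to
`trace(Σ Q)`, where `Σ` is the unique solution of `Σ = A Σ Aᵀ + W`. -/
theorem cesaro_average_cost_converges {n : ℕ}
    (A : Matrix (Fin n) (Fin n) ℝ)
    (hA : ∀ lam : ℂ, ((A.map (Complex.ofReal)) -
        lam • (1 : Matrix (Fin n) (Fin n) ℂ)).det = 0 → ‖lam‖ < 1)
    (W Q : Matrix (Fin n) (Fin n) ℝ)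
    (Sseq : ℕ → Matrix (Fin n) (Fin n) ℝ)
    (hrec : ∀ t, Sseq (t + 1) = A * Sseq t * Aᵀ + W)
    (S : Matrix (Fin n) (Fin n) ℝ)
    (hS : S = A * S * Aᵀ + W)
    (hSuniq : ∀ S' : Matrix (Fin n) (Fin n) ℝ, S' = A * S' * Aᵀ + W → S' = S) :
    Filter.Tendsto
      (fun T : ℕ => (∑ t ∈ Finset.range T, (Sseq t * Q).trace) / (T : ℝ))
      Filter.atTop (nhds ((S * Q).trace)) := by
  set E : Matrix (Fin n) (Fin n) ℝ := Sseq 0 - S with hEdef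
  have hE : ∀ t, Sseq t = A ^ t * E * (A ^ t)ᵀ + S := by
    intro t
    induction t with
    | zero => simp [hEdef]
    | succ t ih =>
      rw [hrec t, ih]
      have hS' := hS
      calc A * (A ^ t * E * (A ^ t)ᵀ + S) * Aᵀ + W
          = A * (A ^ t * E * (A ^ t)ᵀ) * Aᵀ + (A * S * Aᵀ + W) := by
            rw [Matrix.mul_add, Matrix.add_mul]; abel
        _ = A ^ (t + 1) * E * (A ^ (t + 1))ᵀ + S := by
            rw [← hS', pow_succ']
            congr 1
            rw [Matrix.transpose_mul]
            noncomm_ring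
  have hpow := pow_tendsto_zero A hA
  have hc : Continuous (fun X : Matrix (Fin n) (Fin n) ℝ =>
      ((X * E * Xᵀ + S) * Q).trace) := by
    apply Continuous.matrix_trace
    exact (((continuous_id.matrix_mul continuous_const).matrix_mul
      continuous_id.matrix_transpose).add continuous_const).matrix_mul continuous_const
  have htr : Tendsto (fun t : ℕ => ((Sseq t) * Q).trace) atTop (𝓝 ((S * Q).trace)) := by
    have h2 := (hc.tendsto 0).comp hpow
    simp only [Function.comp_def] at h2
    have h3 : ((0 * E * (0 : Matrix (Fin n) (Fin n) ℝ)ᵀ + S) * Q).trace = (S * Q).trace := by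
      simp
    rw [h3] at h2
    refine h2.congr fun t => ?_
    rw [hE t]
  have := htr.cesaro
  refine this.congr fun T => ?_
  rw [div_eq_inv_mul]
end
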